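/- If α →_k β and k ≤ l, then α →_l β; and if β < α < ε₀, then α →_{|β|} β, where |β| is the number of occurrences of ω in the complete Cantor normal form of β (coefficients expanded). -/

import Mathlib

open ONote in
/-- One step along the standard fundamental sequences: `b = a[k]`
(for successor `a`, `a[k]` is the predecessor of `a`). -/
def FundStep (k : ℕ) (a b : ONote) : Prop :=
  a.fundamentalSequence = Sum.inl (some b) ∨
    ∃ f, a.fundamentalSequence = Sum.inr f ∧ b = f k

/-- `a →_k b`: `b` is obtained from `a` by finitely many steps, each taking the
`k`-th member of the fundamental sequence. -/
def StepsTo (k : ℕ) (a b : ONote) : Prop := Relation.ReflTransGen (FundStep k) a b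

/-- the number of occurrences of `ω` in the complete Cantor normal form of an
ordinal notation (coefficients expanded into repeated summands) -/
def omegaCount : ONote → ℕ
  | ONote.zero => 0
  | ONote.oadd e n a => (n : ℕ) * (1 + omegaCount e) + omegaCount a

/-!
Monotonicity reduces to the Bachmann-type property `α[l] →_l α[k]` for `k ≤ l`, proved by
structural induction on the notation: the fundamental sequences of `ω^(a+1)` and `ω^a` (`a` limit)
are `ω^a·(i+1)` and `ω^(a[i])`, and every other limit sequence is such a one behind a fixed prefix.

For reachability the key estimate is `β ≤ α[|β|]` for limit `α` and normal `β < α`, again by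
structural induction. For `α = ω^(a+1)` it holds because the leading coefficient of `β` is at most
`|β|`; for `α = ω^a` with `a` limit, the leading exponent `e < a` of `β` satisfies
`e ≤ a[|e|] < a[|β|]`. Well-founded induction on `α` then finishes: one step from `α` (to its
predecessor or to `α[|β|]`) lands on `β` or on something still above it.
-/

open Ordinal Relation

namespace ONote

variable {a a' b α β : ONote} {f g : ℕ → ONote}

instance : WellFoundedLT ONote := ⟨InvImage.wf repr Ordinal.lt_wf⟩

theorem fundamentalSequenceProp_of_eq {x : Option ONote ⊕ (ℕ → ONote)}
    (h : α.fundamentalSequence = x) : FundamentalSequenceProp α x :=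
  h ▸ fundamentalSequence_has_prop α

theorem eq_zero_of_fundamentalSequence_eq_inl_none (h : α.fundamentalSequence = Sum.inl none) :
    α = 0 :=
  fundamentalSequenceProp_of_eq h

theorem repr_eq_succ_of_fundamentalSequence_eq_inl_some
    (h : α.fundamentalSequence = Sum.inl (some a')) : α.repr = Order.succ a'.repr :=
  (fundamentalSequenceProp_of_eq h).1

theorem NF.of_fundamentalSequence_eq_inl_some (hα : α.NF)
    (h : α.fundamentalSequence = Sum.inl (some a')) : a'.NF :=
  (fundamentalSequenceProp_of_eq h).2 hα

theorem lt_of_fundamentalSequence_eq_inl_some (h : α.fundamentalSequence = Sum.inl (some a')) :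
    a' < α := by
  rw [lt_def, repr_eq_succ_of_fundamentalSequence_eq_inl_some h]
  exact Order.lt_succ _

theorem le_of_lt_of_fundamentalSequence_eq_inl_some
    (h : α.fundamentalSequence = Sum.inl (some a')) (hβ : β < α) : β ≤ a' := by
  rw [lt_def, repr_eq_succ_of_fundamentalSequence_eq_inl_some h] at hβ
  exact Order.lt_succ_iff.1 hβ

theorem lt_of_fundamentalSequence_eq_inr (h : α.fundamentalSequence = Sum.inr f) (i : ℕ) :
    f i < α :=
  ((fundamentalSequenceProp_of_eq h).2.1 i).2.1

theorem NF.of_fundamentalSequence_eq_inr (hα : α.NF) (h : α.fundamentalSequence = Sum.inr f)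
    (i : ℕ) : (f i).NF :=
  ((fundamentalSequenceProp_of_eq h).2.1 i).2.2 hα

theorem strictMono_of_fundamentalSequence_eq_inr (h : α.fundamentalSequence = Sum.inr f) :
    StrictMono f :=
  strictMono_nat_of_lt_succ fun i => ((fundamentalSequenceProp_of_eq h).2.1 i).1

theorem fundamentalSequence_oadd_of_inr (a : ONote) (m : ℕ+)
    (h : b.fundamentalSequence = Sum.inr f) :
    (oadd a m b).fundamentalSequence = Sum.inr fun i => oadd a m (f i) := by
  rw [fundamentalSequence, h]

theorem fundamentalSequence_oadd_of_inl_some (a : ONote) (m : ℕ+)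
    (h : b.fundamentalSequence = Sum.inl (some a')) :
    (oadd a m b).fundamentalSequence = Sum.inl (some (oadd a m a')) := by
  rw [fundamentalSequence, h]

theorem fundamentalSequence_opow_of_inl_some (h : a.fundamentalSequence = Sum.inl (some a')) :
    (oadd a 1 0).fundamentalSequence = Sum.inr fun i => oadd a' i.succPNat 0 := by
  rw [fundamentalSequence, h]; rfl

theorem fundamentalSequence_opow_of_inr (h : a.fundamentalSequence = Sum.inr g) :
    (oadd a 1 0).fundamentalSequence = Sum.inr fun i => oadd (g i) 1 0 := by
  rw [fundamentalSequence, h]; rfl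

theorem fundamentalSequence_oadd_add_one (a : ONote) (n : ℕ+) :
    (oadd a (n + 1) 0).fundamentalSequence =
      Sum.map (Option.map (oadd a n)) (fun w i => oadd a n (w i))
        (oadd a 1 0).fundamentalSequence := by
  have hn : (n + 1).natPred = n.natPred + 1 := by
    simp only [PNat.natPred, PNat.add_coe, PNat.val_ofNat]; have := n.pos; omega
  have hz : (0 : ONote).fundamentalSequence = Sum.inl none := rfl
  rw [fundamentalSequence, fundamentalSequence, hn, hz]
  rcases ha : a.fundamentalSequence with (_ | a') | g
  · -- here the definition produces `oadd 0 n 0`, not `oadd a n 0`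
    obtain rfl := eq_zero_of_fundamentalSequence_eq_inl_none ha
    simp only [PNat.succPNat_natPred]; rfl
  all_goals simp only [PNat.succPNat_natPred]; rfl

theorem exists_of_fundamentalSequence_oadd_add_one_eq_inr {n : ℕ+}
    (h : (oadd a (n + 1) 0).fundamentalSequence = Sum.inr f) :
    ∃ w, (oadd a 1 0).fundamentalSequence = Sum.inr w ∧ f = fun i => oadd a n (w i) := by
  rw [fundamentalSequence_oadd_add_one] at h
  rcases hw : (oadd a 1 0).fundamentalSequence with _ | w <;> rw [hw] at h <;> cases h
  exact ⟨w, rfl, rfl⟩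

theorem repr_oadd_add_one_zero (a : ONote) (n : ℕ+) :
    (oadd a (n + 1) 0).repr = ω ^ a.repr * n + (oadd a 1 0).repr := by
  simp [repr, mul_add_one]

theorem oadd_le_oadd_3 {e : ONote} {n : ℕ+} (h : a ≤ b) : oadd e n a ≤ oadd e n b :=
  le_def.2 (add_le_add_right (le_def.1 h) _)

theorem lt_of_oadd_lt_oadd_one_zero {e c : ONote} {n : ℕ+} (h : oadd e n c < oadd a 1 0) :
    e < a := by
  rw [lt_def] at h ⊢
  refine (opow_lt_opow_iff_right one_lt_omega0).1 ((omega0_le_oadd e n c).trans_lt ?_)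
  simpa [repr] using h

theorem exists_eq_oadd_of_lt_of_lt {n : ℕ+} (hβ : β.NF) (ha : a.NF) (h₁ : oadd a n 0 < β)
    (h₂ : β < oadd a (n + 1) 0) : ∃ c, β = oadd a n c := by
  cases β with
  | zero => exact absurd (lt_def.1 h₁) not_lt_zero
  | oadd e n' c =>
    have := hβ.fst
    have := ha
    rcases lt_trichotomy e.repr a.repr with hea | hea | hae
    · exact absurd h₁ (oadd_lt_oadd_1 hβ hea).asymm
    · obtain rfl := repr_inj.1 hea
      rcases lt_trichotomy (n' : ℕ) n with hn | hn | hn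
      · exact absurd h₁ (oadd_lt_oadd_2 (o₂ := 0) hβ hn).asymm
      · exact ⟨c, by rw [PNat.coe_inj.1 hn]⟩
      · refine absurd h₂ (not_lt_of_ge (le_def.2 ?_))
        have hn' : (((n + 1 : ℕ+) : ℕ) : Ordinal) ≤ (n' : ℕ) := by
          exact_mod_cast (show (n : ℕ) + 1 ≤ n' from hn)
        simp only [repr, add_zero]
        refine le_add_right ?_
        gcongr
    · exact absurd h₂ (oadd_lt_oadd_1 (NF.oadd_zero a _) hae).asymm

end ONote

open ONote

variable {a x y α β γ : ONote} {f g : ℕ → ONote} {k l : ℕ}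

theorem FundStep.oadd_tail (a : ONote) (m : ℕ+) (h : FundStep k x y) :
    FundStep k (oadd a m x) (oadd a m y) := by
  rcases h with h | ⟨f, hf, rfl⟩
  · exact .inl (fundamentalSequence_oadd_of_inl_some a m h)
  · exact .inr ⟨_, fundamentalSequence_oadd_of_inr a m hf, rfl⟩

theorem StepsTo.oadd_tail (a : ONote) (m : ℕ+) (h : StepsTo k x y) :
    StepsTo k (oadd a m x) (oadd a m y) :=
  ReflTransGen.lift (oadd a m) (fun _ _ => FundStep.oadd_tail a m) _ _ h

theorem stepsTo_zero (k : ℕ) (α : ONote) : StepsTo k α 0 := by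
  induction α using WellFoundedLT.induction with
  | _ α ih =>
    rcases h : α.fundamentalSequence with (_ | a') | f
    · rw [eq_zero_of_fundamentalSequence_eq_inl_none h]
      exact .refl
    · exact .head (.inl h) (ih a' (lt_of_fundamentalSequence_eq_inl_some h))
    · exact .head (.inr ⟨f, h, rfl⟩) (ih _ (lt_of_fundamentalSequence_eq_inr h k))

theorem FundStep.oadd_add_one_zero (n : ℕ+) (h : FundStep k (oadd a 1 0) x) :
    FundStep k (oadd a (n + 1) 0) (oadd a n x) := by
  rcases h with h | ⟨w, hw, rfl⟩
  · exact .inl (by rw [fundamentalSequence_oadd_add_one, h]; rfl)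
  · exact .inr ⟨_, by rw [fundamentalSequence_oadd_add_one, hw]; rfl, rfl⟩

theorem stepsTo_oadd_add_one_zero (k : ℕ) (a : ONote) (n : ℕ+) :
    StepsTo k (oadd a (n + 1) 0) (oadd a n 0) := by
  obtain h | ⟨x, hx, hx0⟩ := (stepsTo_zero k (oadd a 1 0)).cases_head
  · cases h
  · exact .head (hx.oadd_add_one_zero n) (StepsTo.oadd_tail a n hx0)

theorem stepsTo_oadd_succPNat (k : ℕ) (a : ONote) {i j : ℕ} (hij : i ≤ j) :
    StepsTo k (oadd a j.succPNat 0) (oadd a i.succPNat 0) := by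
  induction j, hij using Nat.le_induction with
  | base => exact .refl
  | succ j _ ih => exact (stepsTo_oadd_add_one_zero k a j.succPNat).trans ih

theorem FundStep.opow (h : FundStep k x y) : StepsTo k (oadd x 1 0) (oadd y 1 0) := by
  rcases h with h | ⟨g, hg, rfl⟩
  · exact .head (.inr ⟨_, fundamentalSequence_opow_of_inl_some h, rfl⟩)
      (stepsTo_oadd_succPNat k y k.zero_le)
  · exact .single (.inr ⟨_, fundamentalSequence_opow_of_inr hg, rfl⟩)

theorem StepsTo.opow (h : StepsTo k x y) : StepsTo k (oadd x 1 0) (oadd y 1 0) :=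
  ReflTransGen.lift' (oadd · 1 0) (fun _ _ => FundStep.opow) _ _ h

def StepsDescending (f : ℕ → ONote) : Prop :=
  ∀ ⦃k l : ℕ⦄, k ≤ l → StepsTo l (f l) (f k)

theorem StepsDescending.oadd_tail (a : ONote) (m : ℕ+) (hf : StepsDescending f) :
    StepsDescending fun i => oadd a m (f i) :=
  fun _ _ hkl => (hf hkl).oadd_tail a m

theorem stepsDescending_oadd_succPNat (a : ONote) :
    StepsDescending fun i => oadd a i.succPNat 0 :=
  fun _ l hkl => stepsTo_oadd_succPNat l a hkl

theorem StepsDescending.opow (hg : StepsDescending g) : StepsDescending fun i => oadd (g i) 1 0 :=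
  fun _ _ hkl => (hg hkl).opow

theorem stepsDescending_of_fundamentalSequence_eq_inr (h : α.fundamentalSequence = Sum.inr f) :
    StepsDescending f := by
  induction α generalizing f with
  | zero => cases h
  | oadd a m b iha ihb =>
    rcases hb : b.fundamentalSequence with (_ | _) | fb
    · obtain rfl := eq_zero_of_fundamentalSequence_eq_inl_none hb
      have hopow {w : ℕ → ONote} (hw : (oadd a 1 0).fundamentalSequence = Sum.inr w) :
          StepsDescending w := by
        rcases ha : a.fundamentalSequence with (_ | a') | g
        · rw [eq_zero_of_fundamentalSequence_eq_inl_none ha] at hw; cases hw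
        · rw [fundamentalSequence_opow_of_inl_some ha] at hw; cases hw
          exact stepsDescending_oadd_succPNat a'
        · rw [fundamentalSequence_opow_of_inr ha] at hw; cases hw
          exact (iha ha).opow
      induction m with
      | one => exact hopow h
      | succ n _ =>
        obtain ⟨w, hw, rfl⟩ := exists_of_fundamentalSequence_oadd_add_one_eq_inr h
        exact (hopow hw).oadd_tail a n
    · rw [fundamentalSequence_oadd_of_inl_some a m hb] at h; cases h
    · rw [fundamentalSequence_oadd_of_inr a m hb] at h; cases h
      exact (ihb hb).oadd_tail a m

theorem FundStep.stepsTo_of_le (h : FundStep k α β) (hkl : k ≤ l) : StepsTo l α β := by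
  rcases h with h | ⟨f, hf, rfl⟩
  · exact .single (.inl h)
  · exact .head (.inr ⟨f, hf, rfl⟩) (stepsDescending_of_fundamentalSequence_eq_inr hf hkl)

theorem StepsTo.mono (h : StepsTo k α β) (hkl : k ≤ l) : StepsTo l α β :=
  ReflTransGen.lift' id (fun _ _ hstep => hstep.stepsTo_of_le hkl) _ _ h

theorem coe_le_omegaCount_oadd (e : ONote) (n : ℕ+) (c : ONote) :
    (n : ℕ) ≤ omegaCount (oadd e n c) := by
  simp only [omegaCount]; nlinarith

theorem omegaCount_lt_omegaCount_oadd (e : ONote) (n : ℕ+) (c : ONote) :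
    omegaCount e < omegaCount (oadd e n c) := by
  simp only [omegaCount]; nlinarith [n.pos]

theorem omegaCount_le_omegaCount_oadd (e : ONote) (n : ℕ+) (c : ONote) :
    omegaCount c ≤ omegaCount (oadd e n c) := by
  simp only [omegaCount]; omega

def DominatesBelow (γ : ONote) (f : ℕ → ONote) : Prop :=
  ∀ ⦃β : ONote⦄, β.NF → β < γ → β ≤ f (omegaCount β)

-- `α = ω^a·n + γ` is stated through `repr`, since for `γ = ω^a` it is not `oadd a n γ`.
theorem DominatesBelow.oadd_tail (ha : a.NF) (n : ℕ+) (hγ : γ ≤ oadd a 1 0) (hf : Monotone f)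
    (h : DominatesBelow γ f) (hα : α.repr = ω ^ a.repr * n + γ.repr) :
    DominatesBelow α fun i => oadd a n (f i) := by
  intro β hβ hβα
  by_cases hβn : β ≤ oadd a n 0
  · exact hβn.trans (oadd_le_oadd_3 (le_def.2 zero_le))
  have hβ₂ : β < oadd a (n + 1) 0 := by
    rw [lt_def, repr_oadd_add_one_zero]
    refine (lt_def.1 hβα).trans_le ?_
    rw [hα]
    exact add_le_add_right (le_def.1 hγ) _
  obtain ⟨c, rfl⟩ := exists_eq_oadd_of_lt_of_lt hβ ha (lt_def.2 (lt_of_not_ge hβn)) hβ₂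
  have hcγ : c < γ := by
    have : ω ^ a.repr * n + c.repr < ω ^ a.repr * n + γ.repr := hα ▸ hβα
    exact lt_def.2 ((add_lt_add_iff_left _).1 this)
  calc oadd a n c ≤ oadd a n (f (omegaCount c)) := oadd_le_oadd_3 (h hβ.snd hcγ)
    _ ≤ oadd a n (f (omegaCount (oadd a n c))) :=
      oadd_le_oadd_3 (hf (omegaCount_le_omegaCount_oadd a n c))

theorem dominatesBelow_opow_of_inl_some {a' : ONote}
    (h : a.fundamentalSequence = Sum.inl (some a')) :
    DominatesBelow (oadd a 1 0) fun i => oadd a' i.succPNat 0 := by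
  rintro (_ | ⟨e, n, c⟩) hβ hβa
  · exact le_def.2 zero_le
  have he : e ≤ a' :=
    le_of_lt_of_fundamentalSequence_eq_inl_some h (lt_of_oadd_lt_oadd_one_zero hβa)
  have hn : (n : ℕ) < (omegaCount (oadd e n c)).succPNat :=
    Nat.lt_succ_of_le (coe_le_omegaCount_oadd e n c)
  refine le_of_lt ?_
  calc oadd e n c < oadd e (omegaCount (oadd e n c)).succPNat 0 := oadd_lt_oadd_2 hβ hn
    _ ≤ oadd a' (omegaCount (oadd e n c)).succPNat 0 := by
      rw [le_def]; simp only [ONote.repr, add_zero]; gcongr; exact omega0_pos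

theorem DominatesBelow.opow (h : DominatesBelow a g) (hg : StrictMono g) :
    DominatesBelow (oadd a 1 0) fun i => oadd (g i) 1 0 := by
  rintro (_ | ⟨e, n, c⟩) hβ hβa
  · exact le_def.2 zero_le
  have he : e < g (omegaCount (oadd e n c)) :=
    lt_of_le_of_lt (h hβ.fst (lt_of_oadd_lt_oadd_one_zero hβa))
      (hg (omegaCount_lt_omegaCount_oadd e n c))
  refine le_of_lt (lt_def.2 ?_)
  calc (oadd e n c).repr < ω ^ Order.succ e.repr := (hβ.below_of_lt (Order.lt_succ _)).repr_lt
    _ ≤ ω ^ (g (omegaCount (oadd e n c))).repr :=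
      opow_le_opow_right omega0_pos (Order.succ_le_of_lt (lt_def.1 he))
    _ = (oadd (g (omegaCount (oadd e n c))) 1 0).repr := by simp [ONote.repr]

theorem dominatesBelow_of_fundamentalSequence_eq_inr (hα : α.NF)
    (h : α.fundamentalSequence = Sum.inr f) : DominatesBelow α f := by
  induction α generalizing f with
  | zero => cases h
  | oadd a m b iha ihb =>
    rcases hb : b.fundamentalSequence with (_ | _) | fb
    · obtain rfl := eq_zero_of_fundamentalSequence_eq_inl_none hb
      have hopow {w : ℕ → ONote} (hw : (oadd a 1 0).fundamentalSequence = Sum.inr w) :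
          DominatesBelow (oadd a 1 0) w := by
        rcases ha : a.fundamentalSequence with (_ | a') | g
        · rw [eq_zero_of_fundamentalSequence_eq_inl_none ha] at hw; cases hw
        · rw [fundamentalSequence_opow_of_inl_some ha] at hw; cases hw
          exact dominatesBelow_opow_of_inl_some ha
        · rw [fundamentalSequence_opow_of_inr ha] at hw; cases hw
          exact (iha hα.fst ha).opow (strictMono_of_fundamentalSequence_eq_inr ha)
      induction m with
      | one => exact hopow h
      | succ n _ =>
        obtain ⟨w, hw, rfl⟩ := exists_of_fundamentalSequence_oadd_add_one_eq_inr h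
        exact (hopow hw).oadd_tail hα.fst n le_rfl
          (strictMono_of_fundamentalSequence_eq_inr hw).monotone
          (repr_oadd_add_one_zero a n)
    · rw [fundamentalSequence_oadd_of_inl_some a m hb] at h; cases h
    · rw [fundamentalSequence_oadd_of_inr a m hb] at h; cases h
      have hba : b ≤ oadd a 1 0 := le_def.2 (by simpa [ONote.repr] using hα.snd'.repr_lt.le)
      exact (ihb hα.snd hb).oadd_tail hα.fst m hba
        (strictMono_of_fundamentalSequence_eq_inr hb).monotone rfl

theorem stepsTo_of_lt (hα : α.NF) (hβ : β.NF) (hβα : β < α) : StepsTo (omegaCount β) α β := by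
  induction α using WellFoundedLT.induction with
  | _ α ih =>
    have step (γ : ONote) (hαγ : FundStep (omegaCount β) α γ) (hγ : γ.NF) (hγα : γ < α)
        (hβγ : β ≤ γ) : StepsTo (omegaCount β) α β := by
      obtain hβγ | hβγ := lt_or_eq_of_le (le_def.1 hβγ)
      · exact .head hαγ (ih γ hγα hγ hβγ)
      · have := hβ; have := hγ
        obtain rfl := repr_inj.1 hβγ
        exact .single hαγ
    rcases h : α.fundamentalSequence with (_ | a') | f
    · rw [eq_zero_of_fundamentalSequence_eq_inl_none h] at hβα
      exact absurd (lt_def.1 hβα) not_lt_zero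
    · exact step a' (.inl h) (hα.of_fundamentalSequence_eq_inl_some h)
        (lt_of_fundamentalSequence_eq_inl_some h)
        (le_of_lt_of_fundamentalSequence_eq_inl_some h hβα)
    · exact step _ (.inr ⟨f, h, rfl⟩) (hα.of_fundamentalSequence_eq_inr h _)
        (lt_of_fundamentalSequence_eq_inr h _)
        (dominatesBelow_of_fundamentalSequence_eq_inr hα h hβ hβα)

/-- **Monotonicity and reachability for `→_k` (Arai).** If `α →_k β` and
`k ≤ l` then `α →_l β`; and if `β < α` then `α →_{|β|} β`, where `|β|` is the
number of `ω`'s in the complete Cantor normal form of `β`. -/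
theorem stepsTo_mono_and_stepsTo_of_lt :
    (∀ (k l : ℕ) (α β : ONote), α.NF → β.NF → StepsTo k α β → k ≤ l →
        StepsTo l α β) ∧
      (∀ α β : ONote, α.NF → β.NF → β < α → StepsTo (omegaCount β) α β) :=
  ⟨fun _ _ _ _ _ _ h hkl => h.mono hkl, fun _ _ hα hβ hβα => stepsTo_of_lt hα hβ hβα⟩
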